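/- Let L_t be a time-dependent GKSL generator with Hermitian jump operators such that t ↦ L_t and t ↦ H_t are continuous, and suppose C^Int = {c·I : c ∈ ℂ}. Then there exist t0 ≥ 0 and δ > 0 such that |||V_{t0, t0+δ}|||₂′ < 1. -/

import Mathlib

open Matrix Filter
open scoped ComplexOrder

attribute [local instance] Matrix.normedAddCommGroup Matrix.normedSpace

noncomputable def hsNorm {d : ℕ} (A : Matrix (Fin d) (Fin d) ℂ) : ℝ :=
  Real.sqrt ((Matrix.trace (Aᴴ * A)).re)

noncomputable def opNorm2 {d : ℕ}
    (Φ : Matrix (Fin d) (Fin d) ℂ → Matrix (Fin d) (Fin d) ℂ) : ℝ :=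
  sSup {r : ℝ | ∃ A, hsNorm A = 1 ∧ r = hsNorm (Φ A)}

noncomputable def gksl {d M : ℕ} (H : ℝ → Matrix (Fin d) (Fin d) ℂ)
    (L : Fin M → ℝ → Matrix (Fin d) (Fin d) ℂ) (t : ℝ)
    (ρ : Matrix (Fin d) (Fin d) ℂ) : Matrix (Fin d) (Fin d) ℂ :=
  (-Complex.I) • (H t * ρ - ρ * H t) +
    ∑ m : Fin M, (L m t * ρ * L m t - (2⁻¹ : ℂ) • ((L m t) ^ 2 * ρ + ρ * (L m t) ^ 2))

def CondQ {d : ℕ}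
    (ℒ : ℝ → Matrix (Fin d) (Fin d) ℂ → Matrix (Fin d) (Fin d) ℂ) : Prop :=
  (∀ t0 : ℝ, 0 ≤ t0 → ∀ ε > (0 : ℝ), ∃ δ > (0 : ℝ), ∀ t : ℝ, 0 ≤ t → |t - t0| < δ →
      opNorm2 (fun A => ℒ t A - ℒ t0 A) < ε) ∧
  (∃ M > (0 : ℝ), ∀ t : ℝ, 0 ≤ t → opNorm2 (ℒ t) ≤ M) ∧
  (∀ ε > (0 : ℝ), ∀ δ > (0 : ℝ), ∀ t0 : ℝ, 0 ≤ t0 →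
    ∃ ts : ℕ → ℝ, (∀ n, 0 ≤ ts n) ∧ (∀ n, ts n + δ < ts (n + 1)) ∧
      ∀ n, ∀ t ∈ Set.Icc (0 : ℝ) δ,
        opNorm2 (fun A => ℒ (ts n + t) A - ℒ (t0 + t) A) < ε)

def IsDensity {d : ℕ} (ρ : Matrix (Fin d) (Fin d) ℂ) : Prop :=
  ρ.PosSemidef ∧ Matrix.trace ρ = 1


noncomputable def hsNormSq {d : ℕ} (A : Matrix (Fin d) (Fin d) ℂ) : ℝ :=
  (Matrix.trace (Aᴴ * A)).re

noncomputable def opNorm2' {d : ℕ}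
    (Φ : Matrix (Fin d) (Fin d) ℂ → Matrix (Fin d) (Fin d) ℂ) : ℝ :=
  sSup {r : ℝ | ∃ A, hsNorm A = 1 ∧ Matrix.trace A = 0 ∧ r = hsNorm (Φ A)}

/-- The adjoint operation on a time-dependent family of matrices:
`ad(A)_t = i[H_t, A_t] + ∂_t A_t`. -/
noncomputable def adOp {d : ℕ} (H : ℝ → Matrix (Fin d) (Fin d) ℂ)
    (A : ℝ → Matrix (Fin d) (Fin d) ℂ) : ℝ → Matrix (Fin d) (Fin d) ℂ :=
  fun t => Complex.I • (H t * A t - A t * H t) + deriv A t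

/-- `n`-fold application of the adjoint operation to a family of matrices. -/
noncomputable def adPow {d : ℕ} (H : ℝ → Matrix (Fin d) (Fin d) ℂ) :
    ℕ → (ℝ → Matrix (Fin d) (Fin d) ℂ) → (ℝ → Matrix (Fin d) (Fin d) ℂ)
  | 0, A => A
  | n + 1, A => adOp H (adPow H n A)


section StmtFiveHelpers

variable {d : ℕ}

lemma hsNormSq_eq_sum (A : Matrix (Fin d) (Fin d) ℂ) :
    hsNormSq A = ∑ i, ∑ j, Complex.normSq (A j i) := by
  simp only [hsNormSq, Matrix.trace, Matrix.diag, Matrix.mul_apply, Matrix.conjTranspose_apply]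
  rw [Complex.re_sum]
  congr 1; ext i
  rw [Complex.re_sum]
  congr 1; ext j
  simp [Complex.mul_re, Complex.normSq_apply]


lemma hsNormSq_nonneg (A : Matrix (Fin d) (Fin d) ℂ) : 0 ≤ hsNormSq A := by
  rw [hsNormSq_eq_sum]
  exact Finset.sum_nonneg fun i _ => Finset.sum_nonneg fun j _ => Complex.normSq_nonneg _

lemma hsNorm_eq (A : Matrix (Fin d) (Fin d) ℂ) : hsNorm A = Real.sqrt (hsNormSq A) := rfl

lemma hsNormSq_eq_zero {A : Matrix (Fin d) (Fin d) ℂ} (h : hsNormSq A = 0) : A = 0 := by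
  rw [hsNormSq_eq_sum] at h
  ext i j
  have h1 : ∀ i ∈ Finset.univ, (0:ℝ) ≤ ∑ j, Complex.normSq (A j i) :=
    fun i _ => Finset.sum_nonneg fun j _ => Complex.normSq_nonneg _
  have h2 := (Finset.sum_eq_zero_iff_of_nonneg h1).mp h j (Finset.mem_univ _)
  have h3 : ∀ k ∈ Finset.univ, (0:ℝ) ≤ Complex.normSq (A k j) :=
    fun k _ => Complex.normSq_nonneg _
  have := (Finset.sum_eq_zero_iff_of_nonneg h3).mp h2 i (Finset.mem_univ _)
  simpa using Complex.normSq_eq_zero.mp this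

noncomputable def eucl {d : ℕ} (A : Matrix (Fin d) (Fin d) ℂ) :
    EuclideanSpace ℂ (Fin d × Fin d) := WithLp.toLp 2 (fun p : Fin d × Fin d => A p.2 p.1)

lemma hsNorm_eq_eucl (A : Matrix (Fin d) (Fin d) ℂ) : hsNorm A = ‖eucl A‖ := by
  rw [hsNorm_eq, hsNormSq_eq_sum, EuclideanSpace.norm_eq]
  congr 1
  rw [← Fintype.sum_prod_type']
  congr 1; ext p
  simp [eucl, Complex.normSq_eq_norm_sq]


lemma eucl_sub (A B : Matrix (Fin d) (Fin d) ℂ) : eucl (A - B) = eucl A - eucl B := by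
  ext p; simp [eucl]

lemma abs_hsNorm_sub (A B : Matrix (Fin d) (Fin d) ℂ) :
    |hsNorm A - hsNorm B| ≤ hsNorm (A - B) := by
  rw [hsNorm_eq_eucl, hsNorm_eq_eucl, hsNorm_eq_eucl, eucl_sub]
  exact abs_norm_sub_norm_le _ _

lemma hasDerivAt_entry {ρ : ℝ → Matrix (Fin d) (Fin d) ℂ} {ρ' : Matrix (Fin d) (Fin d) ℂ}
    {t : ℝ} (h : HasDerivAt ρ ρ' t) (i j : Fin d) :
    HasDerivAt (fun s => ρ s i j) (ρ' i j) t := by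
  have h1 : HasDerivAt (fun s => (ρ s : Fin d → Fin d → ℂ)) ρ' t := h
  exact hasDerivAt_pi.mp (hasDerivAt_pi.mp h1 i) j

lemma hasDerivAt_of_entries {ρ : ℝ → Matrix (Fin d) (Fin d) ℂ} {ρ' : Matrix (Fin d) (Fin d) ℂ}
    {t : ℝ} (h : ∀ i j, HasDerivAt (fun s => ρ s i j) (ρ' i j) t) :
    HasDerivAt ρ ρ' t := by
  have : HasDerivAt (fun s => (ρ s : Fin d → Fin d → ℂ)) ρ' t :=
    hasDerivAt_pi.mpr fun i => hasDerivAt_pi.mpr fun j => h i j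
  exact this

lemma hasDerivAt_mul {P Q : ℝ → Matrix (Fin d) (Fin d) ℂ}
    {P' Q' : Matrix (Fin d) (Fin d) ℂ} {t : ℝ}
    (hP : HasDerivAt P P' t) (hQ : HasDerivAt Q Q' t) :
    HasDerivAt (fun s => P s * Q s) (P' * Q t + P t * Q') t := by
  apply hasDerivAt_of_entries
  intro i j
  have : ∀ s, (P s * Q s) i j = ∑ k, P s i k * Q s k j := fun s => Matrix.mul_apply
  simp only [Matrix.add_apply, Matrix.mul_apply]
  refine HasDerivAt.congr_deriv (HasDerivAt.fun_sum fun k _ =>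
    ((hasDerivAt_entry hP i k).mul (hasDerivAt_entry hQ k j))) ?_
  rw [← Finset.sum_add_distrib]

lemma hasDerivAt_conjTranspose {ρ : ℝ → Matrix (Fin d) (Fin d) ℂ}
    {ρ' : Matrix (Fin d) (Fin d) ℂ} {t : ℝ} (h : HasDerivAt ρ ρ' t) :
    HasDerivAt (fun s => (ρ s)ᴴ) ρ'ᴴ t := by
  apply hasDerivAt_of_entries
  intro i j
  simp only [Matrix.conjTranspose_apply]
  exact (hasDerivAt_entry h j i).star

lemma hasDerivAt_re {f : ℝ → ℂ} {f' : ℂ} {t : ℝ} (h : HasDerivAt f f' t) :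
    HasDerivAt (fun s => (f s).re) f'.re t :=
  (Complex.reCLM.hasFDerivAt.comp_hasDerivAt t h)

lemma hasDerivAt_trace {ρ : ℝ → Matrix (Fin d) (Fin d) ℂ} {ρ' : Matrix (Fin d) (Fin d) ℂ}
    {t : ℝ} (h : HasDerivAt ρ ρ' t) :
    HasDerivAt (fun s => Matrix.trace (ρ s)) (Matrix.trace ρ') t := by
  simp only [Matrix.trace, Matrix.diag]
  exact HasDerivAt.fun_sum fun i _ => hasDerivAt_entry h i i

lemma hasDerivAt_hsNormSq {ρ : ℝ → Matrix (Fin d) (Fin d) ℂ} {ρ' : Matrix (Fin d) (Fin d) ℂ}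
    {t : ℝ} (h : HasDerivAt ρ ρ' t) :
    HasDerivAt (fun s => hsNormSq (ρ s))
      (2 * (Matrix.trace ((ρ t)ᴴ * ρ')).re) t := by
  have h1 := hasDerivAt_mul (hasDerivAt_conjTranspose h) h
  have h2 := hasDerivAt_re (hasDerivAt_trace h1)
  refine h2.congr_deriv ?_
  have : Matrix.trace (ρ'ᴴ * ρ t) = starRingEnd ℂ (Matrix.trace ((ρ t)ᴴ * ρ')) := by
    have := Matrix.trace_conjTranspose ((ρ t)ᴴ * ρ')
    rw [Matrix.conjTranspose_mul, Matrix.conjTranspose_conjTranspose] at this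
    rw [this]; rfl
  simp [Matrix.trace_add, this, Complex.add_re, Complex.conj_re]
  ring

lemma diss_identity {L A : Matrix (Fin d) (Fin d) ℂ} (hL : Lᴴ = L) :
    Matrix.trace (Aᴴ * (L*A*L - (2⁻¹:ℂ) • (L^2*A + A*L^2)))
      = -(2⁻¹:ℂ) * Matrix.trace ((L*A - A*L)ᴴ * (L*A - A*L)) := by
  have cyc1 : Matrix.trace (L*Aᴴ*L*A) = Matrix.trace (Aᴴ*L*A*L) := by
    rw [show L*Aᴴ*L*A = L*(Aᴴ*L*A) by simp [mul_assoc], Matrix.trace_mul_comm]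
  have cyc2 : Matrix.trace (L*Aᴴ*A*L) = Matrix.trace (Aᴴ*A*L*L) := by
    rw [show L*Aᴴ*A*L = L*(Aᴴ*A*L) by simp [mul_assoc], Matrix.trace_mul_comm]
  simp only [Matrix.conjTranspose_sub, Matrix.conjTranspose_mul, hL, pow_two,
    sub_mul, mul_sub, mul_add, add_mul, Matrix.mul_smul, Matrix.smul_mul,
    Matrix.trace_sub, Matrix.trace_add, Matrix.trace_smul, smul_eq_mul,
    ← mul_assoc]
  rw [cyc1, cyc2]
  ring

lemma ham_real {H A : Matrix (Fin d) (Fin d) ℂ} (hH : Hᴴ = H) :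
    ((-Complex.I) * Matrix.trace (Aᴴ*(H*A-A*H))).re = 0 := by
  have hconj : (starRingEnd ℂ) (Matrix.trace (Aᴴ*(H*A-A*H))) = Matrix.trace (Aᴴ*(H*A-A*H)) := by
    have h1 : (starRingEnd ℂ) (Matrix.trace (Aᴴ*(H*A-A*H)))
        = Matrix.trace ((Aᴴ*(H*A-A*H))ᴴ) := (Matrix.trace_conjTranspose _).symm
    rw [h1, Matrix.conjTranspose_mul, Matrix.conjTranspose_sub, Matrix.conjTranspose_mul,
      Matrix.conjTranspose_mul, Matrix.conjTranspose_conjTranspose, hH]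
    have c1 : Matrix.trace ((Aᴴ*H - H*Aᴴ) * A) = Matrix.trace (Aᴴ*(H*A) - Aᴴ*(A*H)) := by
      rw [sub_mul, Matrix.trace_sub, Matrix.trace_sub]
      congr 1
      · simp [mul_assoc]
      · rw [show H*Aᴴ*A = H*(Aᴴ*A) by simp [mul_assoc], Matrix.trace_mul_comm]
        simp [mul_assoc]
    rw [c1, mul_sub]
  have him : (Matrix.trace (Aᴴ*(H*A-A*H))).im = 0 := by
    have := congrArg Complex.im hconj
    simp only [Complex.conj_im] at this
    linarith
  simp [Complex.mul_re, him]


lemma trace_gksl {M : ℕ} {H : ℝ → Matrix (Fin d) (Fin d) ℂ}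
    {L : Fin M → ℝ → Matrix (Fin d) (Fin d) ℂ} {t : ℝ} (A : Matrix (Fin d) (Fin d) ℂ)
    (hH : (H t)ᴴ = H t) (hL : ∀ m, (L m t)ᴴ = L m t) :
    2 * (Matrix.trace (Aᴴ * gksl H L t A)).re
      = -∑ m, hsNormSq (L m t * A - A * L m t) := by
  have expand : Matrix.trace (Aᴴ * gksl H L t A)
      = (-Complex.I) * Matrix.trace (Aᴴ*(H t*A - A*H t))
        + ∑ m, Matrix.trace (Aᴴ * (L m t*A*L m t - (2⁻¹:ℂ) • ((L m t)^2*A + A*(L m t)^2))) := by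
    simp only [gksl, Matrix.mul_add, Matrix.trace_add, Finset.mul_sum, Matrix.trace_sum,
      Matrix.mul_smul, Matrix.trace_smul, smul_eq_mul]
  rw [expand]
  simp only [Complex.add_re, Complex.re_sum, mul_add, ham_real hH, zero_add, Finset.mul_sum]
  rw [← Finset.sum_neg_distrib]
  refine Finset.sum_congr rfl fun m _ => ?_
  rw [diss_identity (hL m)]
  have : (-(2⁻¹:ℂ) * Matrix.trace ((L m t*A - A*L m t)ᴴ * (L m t*A - A*L m t))).re
      = -(2⁻¹:ℝ) * hsNormSq (L m t*A - A*L m t) := by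
    simp [Complex.mul_re, hsNormSq]
  rw [this]
  ring

lemma gksl_path_deriv {M : ℕ} {H : ℝ → Matrix (Fin d) (Fin d) ℂ}
    {L : Fin M → ℝ → Matrix (Fin d) (Fin d) ℂ} {ρ : ℝ → Matrix (Fin d) (Fin d) ℂ} {t : ℝ}
    (hH : (H t)ᴴ = H t) (hL : ∀ m, (L m t)ᴴ = L m t)
    (hρ : HasDerivAt ρ (gksl H L t (ρ t)) t) :
    HasDerivAt (fun s => hsNormSq (ρ s))
      (-∑ m, hsNormSq (L m t * ρ t - ρ t * L m t)) t := by
  have := hasDerivAt_hsNormSq hρ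
  rwa [trace_gksl _ hH hL] at this

lemma hsNormSq_antitone {M : ℕ} {H : ℝ → Matrix (Fin d) (Fin d) ℂ}
    {L : Fin M → ℝ → Matrix (Fin d) (Fin d) ℂ} {s : ℝ} (hs : 0 ≤ s)
    (hH : ∀ t : ℝ, 0 ≤ t → (H t)ᴴ = H t) (hL : ∀ m, ∀ t : ℝ, 0 ≤ t → (L m t)ᴴ = L m t)
    {ρ : ℝ → Matrix (Fin d) (Fin d) ℂ}
    (hρ : ∀ t : ℝ, s ≤ t → HasDerivAt ρ (gksl H L t (ρ t)) t) :
    AntitoneOn (fun t => hsNormSq (ρ t)) (Set.Ici s) := by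
  have key : ∀ t : ℝ, s ≤ t → HasDerivAt (fun u => hsNormSq (ρ u))
      (-∑ m, hsNormSq (L m t * ρ t - ρ t * L m t)) t := fun t ht =>
    gksl_path_deriv (hH t (hs.trans ht)) (fun m => hL m t (hs.trans ht)) (hρ t ht)
  apply antitoneOn_of_deriv_nonpos (convex_Ici s)
  · exact fun t ht => (key t ht).continuousAt.continuousWithinAt
  · intro t ht
    rw [interior_Ici] at ht
    exact (key t ht.le).differentiableAt.differentiableWithinAt
  · intro t ht
    rw [interior_Ici] at ht
    rw [(key t ht.le).deriv]
    simp only [neg_nonpos]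
    exact Finset.sum_nonneg fun m _ => hsNormSq_nonneg _

lemma gksl_sub {M : ℕ} (H : ℝ → Matrix (Fin d) (Fin d) ℂ)
    (L : Fin M → ℝ → Matrix (Fin d) (Fin d) ℂ) (t : ℝ) (A B : Matrix (Fin d) (Fin d) ℂ) :
    gksl H L t (A - B) = gksl H L t A - gksl H L t B := by
  simp only [gksl, mul_sub, sub_mul, smul_sub, smul_add, Finset.sum_sub_distrib,
    Finset.sum_add_distrib]
  abel

lemma diss_zero {L A : Matrix (Fin d) (Fin d) ℂ} (h : L*A = A*L) :
    L*A*L - (2⁻¹:ℂ) • (L^2*A + A*L^2) = 0 := by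
  have h1 : L*A*L = A*L^2 := by rw [h, pow_two, mul_assoc]
  have h2 : L^2*A = A*L^2 := by
    rw [pow_two, mul_assoc, h, ← mul_assoc, h, mul_assoc]
  rw [h1, h2, ← two_smul ℂ (A*L^2), smul_smul]
  norm_num

lemma const_of_hasDerivAt_zero {f : ℝ → Matrix (Fin d) (Fin d) ℂ} {s : Set ℝ}
    (hs : Convex ℝ s) (hf : ∀ x ∈ s, HasDerivAt f 0 x) {x y : ℝ}
    (hx : x ∈ s) (hy : y ∈ s) : f x = f y := by
  have h := hs.norm_image_sub_le_of_norm_hasDerivWithin_le (C := 0)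
    (f' := fun _ => (0 : Matrix (Fin d) (Fin d) ℂ))
    (fun z hz => (hf z hz).hasDerivWithinAt) (fun z _ => by simp) hx hy
  rw [zero_mul] at h
  have := le_antisymm h (norm_nonneg _)
  rwa [norm_eq_zero, sub_eq_zero, eq_comm] at this

lemma unitary_of_ode {H U : ℝ → Matrix (Fin d) (Fin d) ℂ}
    (hH : ∀ t : ℝ, 0 ≤ t → (H t)ᴴ = H t) (hU0 : U 0 = 1)
    (hU : ∀ t : ℝ, 0 ≤ t → HasDerivAt U ((-Complex.I) • (H t * U t)) t) :
    ∀ t : ℝ, 0 ≤ t → (U t)ᴴ * U t = 1 := by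
  intro t ht
  have key : ∀ s : ℝ, s ∈ Set.Ici (0:ℝ) → HasDerivAt (fun τ => (U τ)ᴴ * U τ) 0 s := by
    intro s hs
    have hs' : (0:ℝ) ≤ s := hs
    have h1 := hasDerivAt_mul (hasDerivAt_conjTranspose (hU s hs')) (hU s hs')
    have e : ((-Complex.I) • (H s * U s))ᴴ * U s + (U s)ᴴ * ((-Complex.I) • (H s * U s))
        = 0 := by
      rw [Matrix.conjTranspose_smul, Matrix.conjTranspose_mul, hH s hs']
      simp only [Matrix.smul_mul, Matrix.mul_smul]
      rw [star_neg, Complex.star_def, Complex.conj_I, neg_neg, ← mul_assoc]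
      simp [mul_assoc]
    rwa [e] at h1
  have := const_of_hasDerivAt_zero (convex_Ici 0) key (Set.mem_Ici.mpr ht) (Set.self_mem_Ici)
  rw [this, hU0]
  simp

lemma continuous_hsNormSq : Continuous (hsNormSq (d := d)) := by
  have : (hsNormSq (d := d)) = fun A => ∑ i, ∑ j, Complex.normSq (A j i) := by
    funext A; exact hsNormSq_eq_sum A
  rw [this]
  refine continuous_finset_sum _ fun i _ => continuous_finset_sum _ fun j _ => ?_
  exact Complex.continuous_normSq.comp (continuous_id.matrix_elem j i)

lemma continuous_hsNorm : Continuous (hsNorm (d := d)) := by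
  have : (hsNorm (d := d)) = fun A => Real.sqrt (hsNormSq A) := rfl
  rw [this]
  exact Real.continuous_sqrt.comp continuous_hsNormSq

lemma continuous_trace : Continuous (fun A : Matrix (Fin d) (Fin d) ℂ => Matrix.trace A) := by
  refine continuous_finset_sum _ fun i _ => continuous_id.matrix_elem i i

lemma entry_normSq_le (A : Matrix (Fin d) (Fin d) ℂ) (i j : Fin d) :
    Complex.normSq (A i j) ≤ hsNormSq A := by
  rw [hsNormSq_eq_sum]
  calc Complex.normSq (A i j)
      ≤ ∑ k, Complex.normSq (A k j) :=
        Finset.single_le_sum (f := fun k => Complex.normSq (A k j))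
          (fun k _ => Complex.normSq_nonneg _) (Finset.mem_univ i)
    _ ≤ ∑ l, ∑ k, Complex.normSq (A k l) := by
        exact Finset.single_le_sum (f := fun l => ∑ k, Complex.normSq (A k l))
          (fun l _ => Finset.sum_nonneg fun k _ => Complex.normSq_nonneg _) (Finset.mem_univ j)

lemma norm_le_hsNorm (A : Matrix (Fin d) (Fin d) ℂ) : ‖A‖ ≤ hsNorm A := by
  rcases Nat.eq_zero_or_pos d with hd | hd
  · subst hd
    have : A = 0 := by ext i; exact absurd i.2 (by omega)
    simp [this, hsNorm]
  rw [hsNorm_eq, Matrix.norm_le_iff (Real.sqrt_nonneg _)]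
  intro i j
  have h1 : ‖A i j‖ = Real.sqrt (Complex.normSq (A i j)) := by
    rw [Complex.norm_def]
  rw [h1]
  exact Real.sqrt_le_sqrt (entry_normSq_le A i j)

lemma hsNorm_le_norm (A : Matrix (Fin d) (Fin d) ℂ) : hsNorm A ≤ d * ‖A‖ := by
  rw [hsNorm_eq]
  have h1 : hsNormSq A ≤ (d:ℝ)^2 * ‖A‖^2 := by
    rw [hsNormSq_eq_sum]
    calc ∑ i, ∑ j, Complex.normSq (A j i)
        ≤ ∑ _i : Fin d, ∑ _j : Fin d, ‖A‖^2 := by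
          refine Finset.sum_le_sum fun i _ => Finset.sum_le_sum fun j _ => ?_
          rw [← Complex.sq_norm]
          exact pow_le_pow_left₀ (norm_nonneg _) (Matrix.norm_entry_le_entrywise_sup_norm A) 2
      _ = (d:ℝ)^2 * ‖A‖^2 := by simp [Finset.sum_const]; ring
  calc Real.sqrt (hsNormSq A) ≤ Real.sqrt ((d:ℝ)^2 * ‖A‖^2) := Real.sqrt_le_sqrt h1
    _ = d * ‖A‖ := by
      rw [Real.sqrt_mul (by positivity), Real.sqrt_sq (by positivity), Real.sqrt_sq (norm_nonneg _)]

lemma hsNormSq_stdBasisMatrix (i j : Fin d) :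
    hsNormSq (Matrix.single i j (1:ℂ)) = 1 := by
  rw [hsNormSq_eq_sum]
  have : ∀ a b : Fin d, Complex.normSq (Matrix.single i j (1:ℂ) b a)
      = if b = i ∧ a = j then 1 else 0 := by
    intro a b
    rw [Matrix.single]
    by_cases h : i = b ∧ j = a
    · simp [Matrix.of_apply, h.1, h.2]
    · rw [Matrix.of_apply, if_neg h]
      simp only [Complex.normSq_zero]
      rw [if_neg (by tauto)]
  simp only [this]
  have h2 : ∀ b : Fin d, ∑ a : Fin d, (if b = i ∧ a = j then (1:ℝ) else 0)
      = if b = i then 1 else 0 := by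
    intro b
    by_cases hb : b = i
    · simp [hb]
    · simp [hb]
  rw [Finset.sum_comm]
  rw [Finset.sum_congr rfl fun b _ => h2 b, Finset.sum_ite_eq' Finset.univ i (fun _ => (1:ℝ))]
  simp



end StmtFiveHelpers

/-- if `C^Int` is trivial, the restricted spectral norm of the propagator
over some time interval is strictly less than 1. -/
theorem stmt5 {d M : ℕ} (hd : 0 < d)
    (H : ℝ → Matrix (Fin d) (Fin d) ℂ)
    (L : Fin M → ℝ → Matrix (Fin d) (Fin d) ℂ)
    (hH : ∀ t : ℝ, 0 ≤ t → (H t).IsHermitian)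
    (hL : ∀ m, ∀ t : ℝ, 0 ≤ t → (L m t).IsHermitian)
    (hHcont : Continuous H)
    (hLcont : ∀ m, Continuous (L m))
    (U : ℝ → Matrix (Fin d) (Fin d) ℂ)
    (hU0 : U 0 = 1)
    (hU : ∀ t : ℝ, 0 ≤ t → HasDerivAt U ((-Complex.I) • (H t * U t)) t)
    (hCint : ∀ O : Matrix (Fin d) (Fin d) ℂ,
      (∀ m, ∀ t : ℝ, 0 ≤ t → Commute ((U t)ᴴ * L m t * U t) O) →
      ∃ c : ℂ, O = c • (1 : Matrix (Fin d) (Fin d) ℂ))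
    (V : ℝ → ℝ → Matrix (Fin d) (Fin d) ℂ → Matrix (Fin d) (Fin d) ℂ)
    (hV0 : ∀ s : ℝ, 0 ≤ s → ∀ X, V s s X = X)
    (hV : ∀ s : ℝ, 0 ≤ s → ∀ X, ∀ t : ℝ, s ≤ t →
      HasDerivAt (fun τ => V s τ X) (gksl H L t (V s t X)) t) :
    ∃ t0 : ℝ, 0 ≤ t0 ∧ ∃ δ > (0 : ℝ), opNorm2' (V t0 (t0 + δ)) < 1 := by
  by_cases hd2 : 2 ≤ d
  case neg =>
    -- d = 1 : the traceless unit sphere is empty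
    have hd1 : d = 1 := by omega
    subst hd1
    refine ⟨0, le_rfl, 1, one_pos, ?_⟩
    have hempty : {r : ℝ | ∃ A, hsNorm A = 1 ∧ Matrix.trace A = 0 ∧
        r = hsNorm (V 0 (0 + 1) A)} = ∅ := by
      ext r
      simp only [Set.mem_setOf_eq, Set.mem_empty_iff_false, iff_false]
      rintro ⟨A, hA1, hA0, -⟩
      have hA : A = 0 := by
        ext i j
        have hi : i = 0 := Subsingleton.elim _ _
        have hj : j = 0 := Subsingleton.elim _ _
        subst hi; subst hj
        have : Matrix.trace A = A 0 0 := by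
          simp [Matrix.trace, Fin.sum_univ_one]
        simp [← this, hA0]
      rw [hA] at hA1
      simp [hsNorm] at hA1
    rw [opNorm2', hempty, Real.sSup_empty]
    norm_num
  case pos =>
  -- Hermitian as equalities
  have hH' : ∀ t : ℝ, 0 ≤ t → (H t)ᴴ = H t := fun t ht => hH t ht
  have hL' : ∀ m, ∀ t : ℝ, 0 ≤ t → (L m t)ᴴ = L m t := fun m t ht => hL m t ht
  by_contra hcon
  push_neg at hcon
  -- unitarity
  have hUU : ∀ t : ℝ, 0 ≤ t → (U t)ᴴ * U t = 1 := unitary_of_ode hH' hU0 hU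
  have hUU' : ∀ t : ℝ, 0 ≤ t → U t * (U t)ᴴ = 1 := fun t ht =>
    mul_eq_one_comm.mp (hUU t ht)
  haveI : ProperSpace (Matrix (Fin d) (Fin d) ℂ) := FiniteDimensional.proper ℂ _
  -- the compact set of traceless unit-HS-norm matrices
  set K0 : Set (Matrix (Fin d) (Fin d) ℂ) :=
    {A | hsNorm A = 1 ∧ Matrix.trace A = 0} with hK0def
  have hK0sub : K0 ⊆ Metric.closedBall 0 1 := by
    rintro A ⟨hA1, -⟩
    rw [Metric.mem_closedBall, dist_zero_right]
    calc ‖A‖ ≤ hsNorm A := norm_le_hsNorm A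
      _ = 1 := hA1
  have hK0cl : IsClosed K0 := by
    apply IsClosed.inter
    · exact isClosed_eq continuous_hsNorm continuous_const
    · exact isClosed_eq continuous_trace continuous_const
  have hK0cp : IsCompact K0 :=
    (isCompact_closedBall (0 : Matrix (Fin d) (Fin d) ℂ) 1).of_isClosed_subset hK0cl hK0sub
  have hK0ne : K0.Nonempty := by
    refine ⟨Matrix.single ⟨0, hd⟩ ⟨1, hd2⟩ (1:ℂ), ?_, ?_⟩
    · rw [hsNorm_eq, hsNormSq_stdBasisMatrix]
      exact Real.sqrt_one
    · apply Matrix.trace_single_eq_of_ne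
      intro h
      have := congrArg Fin.val h
      simp at this
  -- the key claim, for every n
  have claim : ∀ n : ℕ, ∃ A, hsNorm A = 1 ∧ Matrix.trace A = 0 ∧
      ∀ m, ∀ t ∈ Set.Ico (0:ℝ) ((n:ℝ)+1), Commute ((U t)ᴴ * L m t * U t) A := by
    intro n
    set T : ℝ := (n:ℝ) + 1 with hTdef
    have hT : (0:ℝ) < T := by positivity
    -- contraction property
    have hcontr : ∀ X Y : Matrix (Fin d) (Fin d) ℂ,
        hsNormSq (V 0 T X - V 0 T Y) ≤ hsNormSq (X - Y) := by
      intro X Y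
      have hρ : ∀ t : ℝ, 0 ≤ t → HasDerivAt (fun τ => V 0 τ X - V 0 τ Y)
          (gksl H L t (V 0 t X - V 0 t Y)) t := by
        intro t ht
        have := (hV 0 le_rfl X t ht).sub (hV 0 le_rfl Y t ht)
        rwa [← gksl_sub] at this
      have hanti := hsNormSq_antitone le_rfl hH' hL' hρ
      have := hanti (Set.self_mem_Ici) (Set.mem_Ici.mpr hT.le) hT.le
      simpa [hV0 0 le_rfl X, hV0 0 le_rfl Y] using this
    -- continuity of the norm of the propagated matrix
    have hφcont : Continuous (fun A => hsNorm (V 0 T A)) := by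
      have hlip : ∀ X Y : Matrix (Fin d) (Fin d) ℂ,
          dist (hsNorm (V 0 T X)) (hsNorm (V 0 T Y)) ≤ (d:ℝ) * dist X Y := by
        intro X Y
        rw [Real.dist_eq, dist_eq_norm]
        calc |hsNorm (V 0 T X) - hsNorm (V 0 T Y)|
            ≤ hsNorm (V 0 T X - V 0 T Y) := abs_hsNorm_sub _ _
          _ ≤ hsNorm (X - Y) := by
              rw [hsNorm_eq, hsNorm_eq]
              exact Real.sqrt_le_sqrt (hcontr X Y)
          _ ≤ (d:ℝ) * ‖X - Y‖ := hsNorm_le_norm _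
      exact (LipschitzWith.of_dist_le_mul (K := ⟨(d:ℝ), by positivity⟩) hlip).continuous
    obtain ⟨An, hAnK, hmax⟩ := hK0cp.exists_isMaxOn hK0ne hφcont.continuousOn
    obtain ⟨hAn1, hAn0⟩ := hAnK
    set v : ℝ := hsNorm (V 0 T An) with hvdef
    -- v ≥ 1 via contradiction hypothesis
    have h1v : 1 ≤ v := by
      have h1 := hcon 0 le_rfl T hT
      rw [zero_add] at h1
      refine le_trans h1 (Real.sSup_le ?_ (Real.sqrt_nonneg _))
      rintro r ⟨A, hA1, hA0, rfl⟩
      exact hmax (Set.mem_setOf_eq ▸ ⟨hA1, hA0⟩)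
    -- the trajectory
    set ρ : ℝ → Matrix (Fin d) (Fin d) ℂ := fun t => V 0 t An with hρdef
    have hρode : ∀ t : ℝ, 0 ≤ t → HasDerivAt ρ (gksl H L t (ρ t)) t :=
      fun t ht => hV 0 le_rfl An t ht
    have hρ0 : ρ 0 = An := hV0 0 le_rfl An
    set f : ℝ → ℝ := fun t => hsNormSq (ρ t) with hfdef
    have hfanti : AntitoneOn f (Set.Ici 0) := hsNormSq_antitone le_rfl hH' hL' hρode
    have hf0 : f 0 = 1 := by
      have : hsNormSq An = (hsNorm An)^2 := (Real.sq_sqrt (hsNormSq_nonneg An)).symm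
      simp [hfdef, hρ0, this, hAn1]
    have hfT : 1 ≤ f T := by
      have : v = Real.sqrt (f T) := rfl
      nlinarith [Real.sq_sqrt (hsNormSq_nonneg (ρ T)), Real.sqrt_nonneg (f T)]
    have hfconst : ∀ t ∈ Set.Icc (0:ℝ) T, f t = 1 := by
      rintro t ⟨ht0, htT⟩
      have h1 : f t ≤ f 0 := hfanti Set.self_mem_Ici (Set.mem_Ici.mpr ht0) ht0
      have h2 : f T ≤ f t := hfanti (Set.mem_Ici.mpr ht0) (Set.mem_Ici.mpr hT.le) htT
      rw [hf0] at h1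
      linarith
    -- commutation along the trajectory
    have hcomm : ∀ t ∈ Set.Ico (0:ℝ) T, ∀ m, L m t * ρ t = ρ t * L m t := by
      rintro t ⟨ht0, htT⟩ m
      have hder : HasDerivAt f (-∑ m', hsNormSq (L m' t * ρ t - ρ t * L m' t)) t :=
        gksl_path_deriv (hH' t ht0) (fun m' => hL' m' t ht0) (hρode t ht0)
      have hDW := hder.hasDerivWithinAt (s := Set.Ici t)
      have hcW : HasDerivWithinAt f 0 (Set.Ici t) t := by
        have hmem : Set.Ico t T ∈ nhdsWithin t (Set.Ici t) :=
          Ico_mem_nhdsGE_of_mem ⟨le_rfl, htT⟩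
        have heq : f =ᶠ[nhdsWithin t (Set.Ici t)] fun _ => 1 := by
          filter_upwards [hmem] with x hx
          exact hfconst x ⟨ht0.trans hx.1, hx.2.le⟩
        exact (hasDerivWithinAt_const t _ 1).congr_of_eventuallyEq heq
          (hfconst t ⟨ht0, htT.le⟩)
      have hzero : (-∑ m', hsNormSq (L m' t * ρ t - ρ t * L m' t)) = 0 := by
        have u := uniqueDiffOn_Ici t t Set.self_mem_Ici
        rw [← hDW.derivWithin u, hcW.derivWithin u]
      have hsum : ∑ m', hsNormSq (L m' t * ρ t - ρ t * L m' t) = 0 := by linarith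
      have hterm := (Finset.sum_eq_zero_iff_of_nonneg
        (fun m' _ => hsNormSq_nonneg _)).mp hsum m (Finset.mem_univ m)
      have := hsNormSq_eq_zero hterm
      rwa [sub_eq_zero] at this
    -- conjugated trajectory is constant
    set σ : ℝ → Matrix (Fin d) (Fin d) ℂ := fun t => (U t)ᴴ * ρ t * U t with hσdef
    have hσder : ∀ t ∈ Set.Ico (0:ℝ) T, HasDerivAt σ 0 t := by
      rintro t ⟨ht0, htT⟩
      have hg : gksl H L t (ρ t) = (-Complex.I) • (H t * ρ t - ρ t * H t) := by
        rw [gksl]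
        rw [Finset.sum_eq_zero fun m _ => diss_zero (hcomm t ⟨ht0, htT⟩ m)]
        rw [add_zero]
      have hρ' : HasDerivAt ρ ((-Complex.I) • (H t * ρ t - ρ t * H t)) t := by
        have := hρode t ht0
        rwa [hg] at this
      have h1 := hasDerivAt_mul
        (hasDerivAt_mul (hasDerivAt_conjTranspose (hU t ht0)) hρ') (hU t ht0)
      have e : (((-Complex.I) • (H t * U t))ᴴ * ρ t + (U t)ᴴ *
            ((-Complex.I) • (H t * ρ t - ρ t * H t))) * U t
          + (U t)ᴴ * ρ t * ((-Complex.I) • (H t * U t)) = 0 := by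
        rw [Matrix.conjTranspose_smul, Matrix.conjTranspose_mul, hH' t ht0]
        rw [star_neg, Complex.star_def, Complex.conj_I, neg_neg]
        simp only [Matrix.smul_mul, Matrix.mul_smul, mul_sub, sub_mul, add_mul, mul_add,
          smul_sub, mul_assoc]
        simp only [neg_smul]
        abel
      rwa [e] at h1
    have hσconst : ∀ t ∈ Set.Ico (0:ℝ) T, σ t = An := by
      intro t ht
      have h0mem : (0:ℝ) ∈ Set.Ico (0:ℝ) T := ⟨le_rfl, hT⟩
      have := const_of_hasDerivAt_zero (convex_Ico 0 T) hσder ht h0mem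
      rw [this]
      simp [hσdef, hρ0, hU0]
    refine ⟨An, hAn1, hAn0, ?_⟩
    rintro m t ⟨ht0, htT⟩
    have hA : An = (U t)ᴴ * ρ t * U t := (hσconst t ⟨ht0, htT⟩).symm
    have hc := hcomm t ⟨ht0, htT⟩ m
    show ((U t)ᴴ * L m t * U t) * An = An * ((U t)ᴴ * L m t * U t)
    rw [hA]
    calc ((U t)ᴴ * L m t * U t) * ((U t)ᴴ * ρ t * U t)
        = (U t)ᴴ * L m t * (U t * (U t)ᴴ) * ρ t * U t := by
          simp only [mul_assoc]
      _ = (U t)ᴴ * (L m t * ρ t) * U t := by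
          rw [hUU' t ht0]
          simp only [mul_assoc, one_mul]
      _ = (U t)ᴴ * (ρ t * L m t) * U t := by rw [hc]
      _ = (U t)ᴴ * ρ t * (U t * (U t)ᴴ) * L m t * U t := by
          rw [hUU' t ht0]
          simp only [mul_assoc, one_mul]
      _ = ((U t)ᴴ * ρ t * U t) * ((U t)ᴴ * L m t * U t) := by
          simp only [mul_assoc]
  -- compact intersection argument
  set Kn : ℕ → Set (Matrix (Fin d) (Fin d) ℂ) := fun n =>
    {A | hsNorm A = 1 ∧ Matrix.trace A = 0 ∧
      ∀ m, ∀ t ∈ Set.Ico (0:ℝ) ((n:ℝ)+1), Commute ((U t)ᴴ * L m t * U t) A} with hKndef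
  have hKcl : ∀ n, IsClosed (Kn n) := by
    intro n
    have : Kn n = K0 ∩ ⋂ (m : Fin M), ⋂ (t : ℝ), ⋂ (_ : t ∈ Set.Ico (0:ℝ) ((n:ℝ)+1)),
        {A | ((U t)ᴴ * L m t * U t) * A = A * ((U t)ᴴ * L m t * U t)} := by
      ext A
      simp only [hKndef, hK0def, Set.mem_setOf_eq, Set.mem_inter_iff, Set.mem_iInter]
      constructor
      · rintro ⟨h1, h2, h3⟩; exact ⟨⟨h1, h2⟩, fun m t ht => h3 m t ht⟩
      · rintro ⟨⟨h1, h2⟩, h3⟩; exact ⟨h1, h2, fun m t ht => h3 m t ht⟩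
    rw [this]
    refine hK0cl.inter (isClosed_iInter fun m => isClosed_iInter fun t =>
      isClosed_iInter fun _ => isClosed_eq ?_ ?_)
    · exact (continuous_const.matrix_mul continuous_id)
    · exact (continuous_id.matrix_mul continuous_const)
  have hKsubK0 : ∀ n, Kn n ⊆ K0 := fun n A hA => ⟨hA.1, hA.2.1⟩
  have hKcp : ∀ n, IsCompact (Kn n) := fun n =>
    hK0cp.of_isClosed_subset (hKcl n) (hKsubK0 n)
  have hKne : ∀ n, (Kn n).Nonempty := by
    intro n
    obtain ⟨A, h1, h2, h3⟩ := claim n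
    exact ⟨A, h1, h2, h3⟩
  have hKmono : ∀ n, Kn (n+1) ⊆ Kn n := by
    rintro n A ⟨h1, h2, h3⟩
    refine ⟨h1, h2, fun m t ht => h3 m t ⟨ht.1, ?_⟩⟩
    have : ((n:ℝ)+1) ≤ ((n:ℝ)+1)+1 := by linarith
    push_cast
    linarith [ht.2]
  obtain ⟨A, hA⟩ := IsCompact.nonempty_iInter_of_sequence_nonempty_isCompact_isClosed
    Kn hKmono hKne (hKcp 0) hKcl
  have hAmem : ∀ n, A ∈ Kn n := by
    intro n
    exact Set.mem_iInter.mp hA n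
  obtain ⟨hA1, hA0, -⟩ := hAmem 0
  have hAcomm : ∀ m, ∀ t : ℝ, 0 ≤ t → Commute ((U t)ᴴ * L m t * U t) A := by
    intro m t ht
    obtain ⟨-, -, h3⟩ := hAmem ⌊t⌋₊
    exact h3 m t ⟨ht, Nat.lt_floor_add_one t⟩
  obtain ⟨c, hc⟩ := hCint A hAcomm
  have htr : Matrix.trace A = c * d := by
    rw [hc, Matrix.trace_smul, Matrix.trace_one]
    simp [mul_comm]
  rw [hA0] at htr
  have hc0 : c = 0 := by
    have hdne : (d:ℂ) ≠ 0 := Nat.cast_ne_zero.mpr hd.ne'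
    rcases mul_eq_zero.mp htr.symm with h | h
    · exact h
    · exact absurd h hdne
  rw [hc0, zero_smul] at hc
  rw [hc] at hA1
  simp [hsNorm] at hA1
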